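/- arXiv:2103.16425 — 2 statements merged into one kernel-verified Lean document; each statement's English description precedes it below -/
import Mathlib

section
/- If the greedy policy π^g begins to transmit a packet j at time t at speed s^g(t) > 3W/D, then no packet was generated in the interval [t − 2D/3, t). -/
open MeasureTheory Set

noncomputable section

/-- An increasing convex power function `P : [0,∞) → [0,∞)` with `P 0 = 0`:
transmitting at speed `s ≥ 0` consumes power `P s`. -/
structure PowerFn where
  P : ℝ → ℝ
  mono : StrictMonoOn P (Set.Ici (0:ℝ))
  convex : ConvexOn ℝ (Set.Ici (0:ℝ)) P
  zero : P 0 = 0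
  nonneg : ∀ x, 0 ≤ x → 0 ≤ P x

/-- Global system parameters: packet size `W > 0` (bits), peak-AoI threshold `D > 0`,
and the power function. -/
structure Params where
  W : ℝ
  D : ℝ
  pf : PowerFn
  hW : 0 < W
  hD : 0 < D

/-- A problem instance: time horizon `T`, initial age `Δ0 < D - ε`, and packet
generation times `gen 0 < gen 1 < ⋯` with inter-generation times `< D - ε`. -/
structure Arrivals (pr : Params) where
  T : ℝ
  Δ0 : ℝ
  ε : ℝ
  gen : ℕ → ℝ
  hT : 0 < T
  hε : 0 < ε
  hΔ0_nonneg : 0 ≤ Δ0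
  hΔ0 : Δ0 < pr.D - ε
  gen_nonneg : ∀ i, 0 ≤ gen i
  gen_mono : StrictMono gen
  gen_gap : ∀ i, gen (i + 1) - gen i < pr.D - ε
  gen_first : gen 0 + Δ0 < pr.D - ε

/-- A (realized) transmission schedule on an instance: at each time `t` the node
transmits packet `assign t` (or none) at speed `speed t ≥ 0`; a packet may only be
transmitted after it is generated, and the speed is `0` when the node is idle. -/
structure Schedule (pr : Params) (σ : Arrivals pr) where
  speed : ℝ → ℝ
  assign : ℝ → Option ℕ
  speed_nonneg : ∀ t, 0 ≤ speed t
  speed_integrable : ∀ a b : ℝ, IntervalIntegrable speed volume a b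
  idle_speed : ∀ t, assign t = none → speed t = 0
  assign_after_gen : ∀ t i, assign t = some i → σ.gen i ≤ t

namespace Schedule

variable {pr : Params} {σ : Arrivals pr}

/-- The speed devoted to packet `i` at time `u`. -/
def txSpeed (S : Schedule pr σ) (i : ℕ) : ℝ → ℝ :=
  fun u => if S.assign u = some i then S.speed u else 0

/-- Bits of packet `i` transmitted during the interval `[a, b)`. -/
def bitsIn (S : Schedule pr σ) (i : ℕ) (a b : ℝ) : ℝ :=
  ∫ u in a..b, S.txSpeed i u

/-- Bits of packet `i` transmitted up to time `t`. -/
def bits (S : Schedule pr σ) (i : ℕ) (t : ℝ) : ℝ := S.bitsIn i 0 t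

/-- Packet `i` has been delivered by time `t`: all of its `W` bits are transmitted. -/
def Delivered (S : Schedule pr σ) (i : ℕ) (t : ℝ) : Prop :=
  pr.W ≤ S.bits i t

/-- `μ(t)`: the generation time of the latest packet delivered by time `t`
(equal to `-Δ0` if no packet has been delivered yet). -/
def latest (S : Schedule pr σ) (t : ℝ) : ℝ :=
  sSup (insert (-σ.Δ0) {x | ∃ i, S.Delivered i t ∧ x = σ.gen i})

/-- The age of information `Δ(t) = t - μ(t)`. -/
def age (S : Schedule pr σ) (t : ℝ) : ℝ := t - S.latest t

/-- The deadline `d(t) = μ(t) + D`. -/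
def deadline (S : Schedule pr σ) (t : ℝ) : ℝ := S.latest t + pr.D

/-- Feasibility: the peak-AoI constraint `Δ(t) < D` holds for all `t ∈ [0, T]`. -/
def Feasible (S : Schedule pr σ) : Prop :=
  ∀ t, 0 ≤ t → t ≤ σ.T → S.age t < pr.D

/-- The energy consumed over `[0, T]`. -/
def energy (S : Schedule pr σ) : ℝ :=
  ∫ t in (0:ℝ)..σ.T, pr.pf.P (S.speed t)

/-- The energy consumed over `[0, T]` while transmitting packets from the set `A`. -/
def energyOn (S : Schedule pr σ) (A : Set ℕ) : ℝ :=
  ∫ t in (0:ℝ)..σ.T,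
    Set.indicator {u : ℝ | ∃ j ∈ A, S.assign u = some j}
      (fun u => pr.pf.P (S.speed u)) t

/-- The schedule transmits packet `i` (at least partially). -/
def Transmits (S : Schedule pr σ) (i : ℕ) : Prop := ∃ t, S.assign t = some i

/-- The delivery time of packet `i`. -/
def delTime (S : Schedule pr σ) (i : ℕ) : ℝ := sInf {t | S.Delivered i t}

/-- Packet `i` is fresh at time `t`: generated by time `t`, later than `μ(t)`. -/
def Fresh (S : Schedule pr σ) (i : ℕ) (t : ℝ) : Prop :=
  σ.gen i ≤ t ∧ S.latest t < σ.gen i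

/-- Packet `i` is available at time `t`: fresh and not yet delivered. -/
def Available (S : Schedule pr σ) (i : ℕ) (t : ℝ) : Prop :=
  S.Fresh i t ∧ ¬ S.Delivered i t

/-- The transmission of packet `i` begins at time `r`. -/
def StartsAt (S : Schedule pr σ) (i : ℕ) (r : ℝ) : Prop :=
  S.assign r = some i ∧ ∀ u, u < r → S.assign u ≠ some i

/-- The speed `s^g(t) = max{W/(d(t) - t), 3W/D}` used by the greedy policy. -/
def gspeed (S : Schedule pr σ) (t : ℝ) : ℝ :=
  max (pr.W / (S.deadline t - t)) (3 * pr.W / pr.D)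

/-- The schedule follows the greedy policy `π^g`: it never idles at a time of
`[0,T]` when `d(t) ≤ T` and a fresh undelivered packet is available; whenever it
begins transmitting a packet (at a time with `d(t) ≤ T`), that packet is the
latest available fresh one, and it is transmitted non-preemptively at the constant
speed `s^g(t) = max{W/(d(t)-t), 3W/D}` until all `W` bits are delivered. -/
def IsGreedy (S : Schedule pr σ) : Prop :=
  (∀ t, 0 ≤ t → t ≤ σ.T → S.assign t = none → S.deadline t ≤ σ.T →
      ¬ ∃ i, S.Available i t) ∧
  (∀ i r, S.StartsAt i r →
      S.deadline r ≤ σ.T ∧ S.Available i r ∧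
      (∀ j, S.Available j r → σ.gen j ≤ σ.gen i) ∧
      (∀ u, r ≤ u → u < r + pr.W / S.gspeed r →
        S.assign u = some i ∧ S.speed u = S.gspeed r)) ∧
  (∀ t i, S.assign t = some i →
      ∃ r, S.StartsAt i r ∧ r ≤ t ∧ t < r + pr.W / S.gspeed r)

end Schedule

/-- A policy maps every instance to a schedule. -/
def Policy (pr : Params) := ∀ σ : Arrivals pr, Schedule pr σ

/-- Two instances agree up to time `t`: same horizon, same initial age, and the
same packet generation times among packets generated by time `t`. -/
def AgreeUpTo (pr : Params) (σ σ' : Arrivals pr) (t : ℝ) : Prop :=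
  σ.T = σ'.T ∧ σ.Δ0 = σ'.Δ0 ∧
  ∀ i, (σ.gen i ≤ t ∨ σ'.gen i ≤ t) → σ.gen i = σ'.gen i

/-- A causal (online) policy: its decisions up to time `t` depend only on the
information available by time `t`. -/
def Causal {pr : Params} (π : Policy pr) : Prop :=
  ∀ σ σ' t, AgreeUpTo pr σ σ' t →
    ∀ u, u ≤ t → (π σ).speed u = (π σ').speed u ∧ (π σ).assign u = (π σ').assign u

/-- A feasible policy satisfies the peak-AoI constraint on every instance. -/
def FeasiblePolicy {pr : Params} (π : Policy pr) : Prop := ∀ σ, (π σ).Feasible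

/-- An optimal offline policy: feasible, and on every instance it consumes no more
energy than any other feasible schedule (it knows all generation times in advance). -/
def OffOpt {pr : Params} (π : Policy pr) : Prop :=
  FeasiblePolicy π ∧
  ∀ (σ : Arrivals pr) (S : Schedule pr σ), S.Feasible → (π σ).energy ≤ S.energy

/-- A greedy policy: causal and following the greedy rule on every instance. -/
def GreedyPolicy {pr : Params} (π : Policy pr) : Prop :=
  Causal π ∧ ∀ σ, (π σ).IsGreedy

/-!
If `s^g(t) > 3W/D` then `0 < d(t) - t < D/3`, so `μ(t) < t - 2D/3`. A packet `i` generated in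
`[t - 2D/3, t)` then stays fresh on `[gen i, t]`, so the greedy node is busy there, and since it
always sends the latest fresh packet, the transmission covering `gen i` started before `gen i` and
ends exactly at `t`. Its packet `k` has `gen k ≤ μ(t) < t - 2D/3`, while it started at some
`r ≥ t - D/3`, every transmission lasting at most `W / (3W/D) = D/3`. The same argument applied to
`k` at `r` gives a transmission ending at `r` and starting before `gen k`, i.e. lasting more than
`D/3`.
-/

namespace Schedule

variable {pr : Params} {σ : Arrivals pr} {S : Schedule pr σ}

def finishTime (S : Schedule pr σ) (r : ℝ) : ℝ := r + pr.W / S.gspeed r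

lemma gspeed_pos (S : Schedule pr σ) (r : ℝ) : 0 < S.gspeed r :=
  (div_pos (mul_pos three_pos pr.hW) pr.hD).trans_le (le_max_right _ _)

lemma lt_finishTime (S : Schedule pr σ) (r : ℝ) : r < S.finishTime r :=
  lt_add_of_pos_right r (div_pos pr.hW (S.gspeed_pos r))

lemma finishTime_le (S : Schedule pr σ) (r : ℝ) : S.finishTime r ≤ r + pr.D / 3 := by
  have hW := pr.hW
  have hD := pr.hD
  have h : pr.W / S.gspeed r ≤ pr.W / (3 * pr.W / pr.D) :=
    div_le_div_of_nonneg_left hW.le (by positivity) (le_max_right _ _)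
  calc S.finishTime r ≤ r + pr.W / (3 * pr.W / pr.D) := add_le_add_right h r
    _ = r + pr.D / 3 := by field_simp

lemma gspeed_mul_sub (S : Schedule pr σ) (r : ℝ) :
    S.gspeed r * (S.finishTime r - r) = pr.W := by
  have := (S.gspeed_pos r).ne'
  rw [finishTime, add_sub_cancel_left]
  field_simp

lemma deadline_sub_mem_Ioo_of_lt_gspeed {t : ℝ} (hfast : 3 * pr.W / pr.D < S.gspeed t) :
    S.deadline t - t ∈ Ioo 0 (pr.D / 3) := by
  have hW := pr.hW
  have hD := pr.hD
  have hfast' : 3 * pr.W / pr.D < pr.W / (S.deadline t - t) := by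
    simpa [gspeed] using hfast
  have hpos : 0 < S.deadline t - t := by
    by_contra! hle
    have : pr.W / (S.deadline t - t) ≤ 0 := div_nonpos_of_nonneg_of_nonpos hW.le hle
    linarith [show 0 < 3 * pr.W / pr.D by positivity]
  rw [div_lt_div_iff₀ hD hpos] at hfast'
  exact ⟨hpos, by nlinarith⟩

lemma StartsAt.eq {k : ℕ} {r r' : ℝ} (h : S.StartsAt k r) (h' : S.StartsAt k r') : r = r' :=
  le_antisymm (not_lt.1 fun hlt => h.2 r' hlt h'.1) (not_lt.1 fun hlt => h'.2 r hlt h.1)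

lemma StartsAt.nonneg {k : ℕ} {r : ℝ} (h : S.StartsAt k r) : 0 ≤ r :=
  (σ.gen_nonneg k).trans (S.assign_after_gen r k h.1)

namespace IsGreedy

lemma deadline_le {k : ℕ} {r : ℝ} (hS : S.IsGreedy) (h : S.StartsAt k r) :
    S.deadline r ≤ σ.T :=
  (hS.2.1 k r h).1

lemma available {k : ℕ} {r : ℝ} (hS : S.IsGreedy) (h : S.StartsAt k r) :
    S.Available k r :=
  (hS.2.1 k r h).2.1

lemma gen_le {i k : ℕ} {r : ℝ} (hS : S.IsGreedy) (h : S.StartsAt k r)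
    (hi : S.Available i r) : σ.gen i ≤ σ.gen k :=
  (hS.2.1 k r h).2.2.1 i hi

lemma assign_eq {k : ℕ} {r u : ℝ} (hS : S.IsGreedy) (h : S.StartsAt k r) (hru : r ≤ u)
    (hu : u < S.finishTime r) : S.assign u = some k :=
  ((hS.2.1 k r h).2.2.2 u hru hu).1

lemma exists_startsAt {k : ℕ} {u : ℝ} (hS : S.IsGreedy) (h : S.assign u = some k) :
    ∃ r, S.StartsAt k r ∧ r ≤ u ∧ u < S.finishTime r :=
  hS.2.2 u k h

lemma txSpeed_eq_indicator {k : ℕ} {r : ℝ} (hS : S.IsGreedy) (h : S.StartsAt k r) :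
    S.txSpeed k = (Ico r (S.finishTime r)).indicator fun _ => S.gspeed r := by
  funext u
  by_cases hu : S.assign u = some k
  · obtain ⟨r', hr', hru, hur⟩ := hS.exists_startsAt hu
    obtain rfl := hr'.eq h
    have hmem : u ∈ Ico r' (S.finishTime r') := ⟨hru, hur⟩
    rw [txSpeed, if_pos hu, indicator_of_mem hmem]
    exact ((hS.2.1 k r' h).2.2.2 u hru hur).2
  · rw [txSpeed, if_neg hu, indicator_of_notMem]
    exact fun hmem => hu (hS.assign_eq h hmem.1 hmem.2)

lemma bits_eq {k : ℕ} {r x : ℝ} (hS : S.IsGreedy) (h : S.StartsAt k r) (hx : 0 ≤ x) :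
    S.bits k x = S.gspeed r * volume.real (Ioc 0 x ∩ Ico r (S.finishTime r)) := by
  rw [bits, bitsIn, hS.txSpeed_eq_indicator h, intervalIntegral.integral_of_le hx,
    setIntegral_indicator measurableSet_Ico, setIntegral_const, smul_eq_mul, mul_comm]

lemma delivered_of_finishTime_le {k : ℕ} {r x : ℝ} (hS : S.IsGreedy) (h : S.StartsAt k r)
    (hx : S.finishTime r ≤ x) : S.Delivered k x := by
  have hr := h.nonneg
  have hx0 : 0 ≤ x := hr.trans ((S.lt_finishTime r).le.trans hx)
  have hsub : Ioo r (S.finishTime r) ⊆ Ioc 0 x ∩ Ico r (S.finishTime r) :=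
    fun u hu => ⟨⟨hr.trans_lt hu.1, hu.2.le.trans hx⟩, hu.1.le, hu.2⟩
  have hvol : S.finishTime r - r ≤ volume.real (Ioc 0 x ∩ Ico r (S.finishTime r)) := by
    rw [← Real.volume_real_Ioo_of_le (S.lt_finishTime r).le]
    exact measureReal_mono hsub
      ((measure_mono inter_subset_right).trans_lt measure_Ico_lt_top).ne
  rw [Delivered, hS.bits_eq h hx0, ← S.gspeed_mul_sub r]
  exact mul_le_mul_of_nonneg_left hvol (S.gspeed_pos r).le

lemma not_delivered_of_lt_finishTime {k : ℕ} {r x : ℝ} (hS : S.IsGreedy)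
    (h : S.StartsAt k r) (hx0 : 0 ≤ x) (hx : x < S.finishTime r) : ¬ S.Delivered k x := by
  have hsub : Ioc 0 x ∩ Ico r (S.finishTime r) ⊆ Icc r x := fun u hu => ⟨hu.2.1, hu.1.2⟩
  have hvol : volume.real (Ioc 0 x ∩ Ico r (S.finishTime r)) < S.finishTime r - r := by
    calc _ ≤ volume.real (Icc r x) := measureReal_mono hsub measure_Icc_lt_top.ne
      _ = max (x - r) 0 := Real.volume_real_Icc
      _ < S.finishTime r - r := max_lt (by linarith) (by linarith [S.lt_finishTime r])
  rw [Delivered, hS.bits_eq h hx0, ← S.gspeed_mul_sub r, not_le]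
  exact mul_lt_mul_of_pos_left hvol (S.gspeed_pos r)

lemma delivered_iff_exists_finishTime_le {k : ℕ} {x : ℝ} (hS : S.IsGreedy) (hx : 0 ≤ x) :
    S.Delivered k x ↔ ∃ r, S.StartsAt k r ∧ S.finishTime r ≤ x := by
  refine ⟨fun hk => ?_, fun ⟨r, hr, hrx⟩ => hS.delivered_of_finishTime_le hr hrx⟩
  by_cases htx : ∃ u, S.assign u = some k
  · obtain ⟨u, hu⟩ := htx
    obtain ⟨r, hr, -, -⟩ := hS.exists_startsAt hu
    exact ⟨r, hr, not_lt.1 fun hlt => hS.not_delivered_of_lt_finishTime hr hx hlt hk⟩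
  · have hzero : S.txSpeed k = 0 := funext fun u => if_neg fun h => htx ⟨u, h⟩
    have : pr.W ≤ 0 := by simpa [Delivered, bits, bitsIn, hzero] using hk
    exact absurd pr.hW this.not_gt

lemma delivered_mono {k : ℕ} {x y : ℝ} (hS : S.IsGreedy) (hx : 0 ≤ x) (hxy : x ≤ y)
    (hk : S.Delivered k x) : S.Delivered k y := by
  obtain ⟨r, hr, hrx⟩ := (hS.delivered_iff_exists_finishTime_le hx).1 hk
  exact hS.delivered_of_finishTime_le hr (hrx.trans hxy)

lemma bddAbove_latest_set {x : ℝ} (hS : S.IsGreedy) (hx : 0 ≤ x) :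
    BddAbove (insert (-σ.Δ0) {y | ∃ i, S.Delivered i x ∧ y = σ.gen i}) := by
  refine ⟨x, fun y hy => ?_⟩
  rcases hy with rfl | ⟨k, hk, rfl⟩
  · linarith [σ.hΔ0_nonneg]
  · obtain ⟨r, hr, hrx⟩ := (hS.delivered_iff_exists_finishTime_le hx).1 hk
    linarith [S.assign_after_gen r k hr.1, S.lt_finishTime r]

lemma gen_le_latest {k : ℕ} {x : ℝ} (hS : S.IsGreedy) (hx : 0 ≤ x) (hk : S.Delivered k x) :
    σ.gen k ≤ S.latest x :=
  le_csSup (hS.bddAbove_latest_set hx) (mem_insert_of_mem _ ⟨k, hk, rfl⟩)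

lemma latest_mono {x y : ℝ} (hS : S.IsGreedy) (hx : 0 ≤ x) (hxy : x ≤ y) :
    S.latest x ≤ S.latest y := by
  refine csSup_le_csSup (hS.bddAbove_latest_set (hx.trans hxy)) (insert_nonempty _ _) ?_
  exact insert_subset_insert fun z ⟨k, hk, hz⟩ => ⟨k, hS.delivered_mono hx hxy hk, hz⟩

lemma available_of_latest_lt {i : ℕ} {u b : ℝ} (hS : S.IsGreedy)
    (hi : S.latest b < σ.gen i) (hiu : σ.gen i ≤ u) (hub : u ≤ b) : S.Available i u := by
  have hu := (σ.gen_nonneg i).trans hiu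
  refine ⟨⟨hiu, (hS.latest_mono hu hub).trans_lt hi⟩, fun hdel => ?_⟩
  exact (hS.gen_le_latest (hu.trans hub) (hS.delivered_mono hu hub hdel)).not_gt hi

/-- A transmission starting at or after `gen i` and finishing by `b` would be of a packet at
least as recent as `i`, and would push `μ(b)` up to `gen i`. -/
lemma exists_covering_window {i j : ℕ} {u b : ℝ} (hS : S.IsGreedy) (hj : S.StartsAt j b)
    (hbT : b ≤ σ.T) (hi : S.latest b < σ.gen i) (hiu : σ.gen i ≤ u) (hub : u < b) :
    ∃ k r, S.StartsAt k r ∧ r < σ.gen i ∧ r ≤ u ∧ u < S.finishTime r ∧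
      S.finishTime r ≤ b := by
  have hu : 0 ≤ u := (σ.gen_nonneg i).trans hiu
  obtain ⟨k, hk⟩ : ∃ k, S.assign u = some k := by
    refine Option.ne_none_iff_exists'.1 fun hidle => hS.1 u hu (hub.le.trans hbT) hidle ?_
      ⟨i, hS.available_of_latest_lt hi hiu hub.le⟩
    exact (add_le_add_left (hS.latest_mono hu hub.le) _).trans (hS.deadline_le hj)
  obtain ⟨r, hr, hru, hur⟩ := hS.exists_startsAt hk
  have hfin : S.finishTime r ≤ b := by
    by_contra! hbr
    obtain rfl : k = j :=
      Option.some_injective _ ((hS.assign_eq hr (hru.trans hub.le) hbr).symm.trans hj.1)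
    exact (hr.eq hj ▸ hru).not_gt hub
  refine ⟨k, r, hr, not_le.1 fun hir => ?_, hru, hur, hfin⟩
  have hik := hS.gen_le hr (hS.available_of_latest_lt hi hir (hru.trans hub.le))
  have hkb := hS.gen_le_latest hj.nonneg (hS.delivered_of_finishTime_le hr hfin)
  linarith

lemma exists_window_finishing_at {i j : ℕ} {b : ℝ} (hS : S.IsGreedy) (hj : S.StartsAt j b)
    (hbT : b ≤ σ.T) (hi : S.latest b < σ.gen i) (hib : σ.gen i < b) :
    ∃ k r, S.StartsAt k r ∧ r < σ.gen i ∧ S.finishTime r = b := by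
  obtain ⟨k, r, hr, hri, hri', hir, hrb⟩ := hS.exists_covering_window hj hbT hi le_rfl hib
  refine ⟨k, r, hr, hri, hrb.antisymm (not_lt.1 fun hlt => ?_)⟩
  obtain ⟨k', r', hr', hr'i, hr'f, hfr', -⟩ :=
    hS.exists_covering_window hj hbT hi hir.le hlt
  have hkk : k' = k := Option.some_injective _
    ((hS.assign_eq hr' hr'i.le (hir.trans hfr')).symm.trans (hS.assign_eq hr hri' hir))
  subst hkk
  exact (hr'.eq hr ▸ hfr').ne rfl

end IsGreedy

end Schedule

/-- Proposition 2: if the greedy policy begins to transmit a packet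
`j` at time `t` at speed `s^g(t) > 3W/D`, then no packet was generated in the
interval `[t - 2D/3, t)`. -/
theorem greedy_fast_implies_no_recent_arrival (pr : Params) (σ : Arrivals pr)
    (S : Schedule pr σ) (hS : S.IsGreedy) (j : ℕ) (t : ℝ)
    (hstart : S.StartsAt j t) (hfast : 3 * pr.W / pr.D < S.gspeed t) :
    ∀ i, ¬ (t - 2 * pr.D / 3 ≤ σ.gen i ∧ σ.gen i < t) := by
  rintro i ⟨hti, hit⟩
  obtain ⟨hgap_pos, hgap_lt⟩ := Schedule.deadline_sub_mem_Ioo_of_lt_gspeed hfast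
  have hlatest : S.latest t < t - 2 * pr.D / 3 := by rw [Schedule.deadline] at hgap_lt; linarith
  have htT : t ≤ σ.T := by linarith [hS.deadline_le hstart]
  obtain ⟨k, r, hk, -, hrt⟩ :=
    hS.exists_window_finishing_at hstart htT (hlatest.trans_le hti) hit
  have hgenk : σ.gen k < t - 2 * pr.D / 3 :=
    (hS.gen_le_latest hstart.nonneg (hS.delivered_of_finishTime_le hk hrt.le)).trans_lt hlatest
  have hr : t - pr.D / 3 ≤ r := by linarith [S.finishTime_le r]
  have hrT : r ≤ σ.T := by linarith [S.lt_finishTime r]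
  obtain ⟨k₂, r₂, -, hr₂, hr₂r⟩ :=
    hS.exists_window_finishing_at hk hrT (hS.available hk).1.2 (by linarith)
  linarith [S.finishTime_le r₂]
end
end

section
/- Let D > 0 and B > 0 be reals, let A be a real with A ≥ 3B, let m ≥ 1 be an integer, let y be an integer with 0 ≤ y ≤ m, and let E be a real with E ≥ y·A·D/3. Then ((m+1)·A·D + E) / ((m−y)·B·D + E) ≤ 2A/B + 1. -/
/-!
Clearing the denominator, it suffices that `(m+1)AD + E ≤ (2A/B + 1)((m-y)BD + E)`.
Since `A/B ≥ 3`, the term `(2A/B)·E` is at least `6E ≥ 2yAD`, so the right-hand side is at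
least `2A(m-y)D + 2yAD = 2mAD ≥ (m+1)AD`, using `m ≥ 1`. Only nonnegativity of the
denominator is needed, since a zero denominator makes the quotient `0`.
-/

lemma add_mul_add_le_div_add_one_mul {D B A m y E : ℝ} (hD : 0 ≤ D) (hB : 0 < B)
    (hA : 3 * B ≤ A) (hm : 1 ≤ m) (hy₀ : 0 ≤ y) (hy : y ≤ m) (hE : y * A * D / 3 ≤ E) :
    (m + 1) * A * D + E ≤ (2 * A / B + 1) * ((m - y) * B * D + E) := by
  have hAD : 0 ≤ A * D := mul_nonneg (by linarith) hD
  have hE₀ : 0 ≤ E := by nlinarith [mul_nonneg hy₀ hAD]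
  have hAE : 2 * y * (A * D) ≤ 2 * A / B * E := by
    have : 3 * E ≤ A / B * E := mul_le_mul_of_nonneg_right ((le_div_iff₀ hB).2 hA) hE₀
    rw [mul_div_assoc, mul_assoc]
    linarith
  have hm_AD : (m + 1) * (A * D) ≤ 2 * m * (A * D) := by nlinarith
  have hBD : 0 ≤ (m - y) * B * D := by
    have : 0 ≤ m - y := sub_nonneg.2 hy
    positivity
  have hexpand : (2 * A / B + 1) * ((m - y) * B * D + E)
      = 2 * (m - y) * (A * D) + (m - y) * B * D + 2 * A / B * E + E := by
    field_simp
    ring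
  rw [hexpand]
  linarith

/-- let `D > 0`, `B > 0` be reals, `A ≥ 3B` a real, `m ≥ 1` an
integer, `y` an integer with `0 ≤ y ≤ m`, and `E` a real with `E ≥ y·A·D/3`.
Then `((m+1)·A·D + E) / ((m-y)·B·D + E) ≤ 2A/B + 1`.  (This is the chain of
estimates in Step 1 of the proof of the competitive-ratio upper bound for the
greedy policy, with `A = P(3W/D)`, `B = P(W/D)`.) -/
theorem greedy_cr_arithmetic
    (D B A : ℝ) (hD : 0 < D) (hB : 0 < B) (hA : 3 * B ≤ A)
    (m y : ℕ) (hm : 1 ≤ m) (hy : y ≤ m)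
    (E : ℝ) (hE : (y : ℝ) * A * D / 3 ≤ E) :
    (((m : ℝ) + 1) * A * D + E) / (((m : ℝ) - (y : ℝ)) * B * D + E)
      ≤ 2 * A / B + 1 := by
  have hmR : (1 : ℝ) ≤ m := by exact_mod_cast hm
  have hyR : (y : ℝ) ≤ m := by exact_mod_cast hy
  have hA₀ : 0 ≤ A := by linarith
  have hE₀ : 0 ≤ E := le_trans (by positivity) hE
  have hden : 0 ≤ ((m : ℝ) - y) * B * D + E :=
    add_nonneg (mul_nonneg (mul_nonneg (sub_nonneg.2 hyR) hB.le) hD.le) hE₀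
  refine div_le_of_le_mul₀ hden (by positivity) ?_
  exact add_mul_add_le_div_add_one_mul hD.le hB hA hmR (Nat.cast_nonneg y) hyR hE
end
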